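/- There exists μ ∈ (1.4, 1.5) satisfying the transcendental equation (μ + 2/3) tan(πμ/2 + π/3) + μ tan(πμ/2) + 2/√3 = 0. -/

import Mathlib

open Real

-- tan(31π/30) = tan(π/30) is small and positive
lemma aux_tan31 : Real.tan (31*π/30) < 0.122 := by
  have hπ := Real.pi_pos
  have hπu := Real.pi_lt_d2
  have h30 : 31*π/30 - π = π/30 := by ring
  have hper : Real.tan (31*π/30 - π) = Real.tan (31*π/30) := Real.tan_periodic.sub_eq _
  rw [← hper, h30, Real.tan_eq_sin_div_cos]
  have hs : Real.sin (π/30) < π/30 := Real.sin_lt (by positivity)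
  have hc : Real.cos (π/6) < Real.cos (π/30) :=
    Real.cos_lt_cos_of_nonneg_of_le_pi (by positivity) (by linarith) (by linarith)
  rw [Real.cos_pi_div_six] at hc
  have h3 : (1.732:ℝ) < Real.sqrt 3 := by
    nlinarith [Real.sq_sqrt (by norm_num : (3:ℝ) ≥ 0), Real.sqrt_nonneg 3]
  have hcpos : (0:ℝ) < Real.cos (π/30) := by linarith
  rw [div_lt_iff₀ hcpos]
  nlinarith

-- tan(7π/10) = -tan(3π/10) is quite negative
lemma aux_tan7 : Real.tan (7*π/10) < -1.12 := by
  have hπ := Real.pi_pos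
  have hπl := Real.pi_gt_d6
  have hπu := Real.pi_lt_d2
  have h10 : 7*π/10 - π = -(3*π/10) := by ring
  have hper : Real.tan (7*π/10 - π) = Real.tan (7*π/10) := Real.tan_periodic.sub_eq _
  rw [← hper, h10, Real.tan_neg, Real.tan_eq_sin_div_cos]
  have hs : Real.sin (π/4) < Real.sin (3*π/10) :=
    Real.sin_lt_sin_of_lt_of_le_pi_div_two (by linarith) (by linarith) (by linarith)
  rw [Real.sin_pi_div_four] at hs
  have hc : Real.cos (3*π/10) = Real.sin (π/5) := by
    rw [← Real.cos_pi_div_two_sub]; ring_nf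
  have hcu : Real.cos (3*π/10) < π/5 := by
    rw [hc]; exact Real.sin_lt (by positivity)
  have hcpos : (0:ℝ) < Real.cos (3*π/10) := by
    rw [hc]; exact Real.sin_pos_of_pos_of_lt_pi (by positivity) (by linarith)
  have h2 : (1.414:ℝ) < Real.sqrt 2 := by
    nlinarith [Real.sq_sqrt (by norm_num : (2:ℝ) ≥ 0), Real.sqrt_nonneg 2]
  have key : (1.12:ℝ) < Real.sin (3*π/10) / Real.cos (3*π/10) := by
    rw [lt_div_iff₀ hcpos]
    nlinarith
  linarith

-- tan(13π/12) = tan(π/12) > 0.257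
lemma aux_tan13 : (0.257:ℝ) < Real.tan (13*π/12) := by
  have hπ := Real.pi_pos
  have hπl := Real.pi_gt_d6
  have hπu := Real.pi_lt_d2
  have h12 : 13*π/12 - π = π/12 := by ring
  have hper : Real.tan (13*π/12 - π) = Real.tan (13*π/12) := Real.tan_periodic.sub_eq _
  rw [← hper, h12, Real.tan_eq_sin_div_cos]
  have hs : π/12 - (π/12)^3/4 < Real.sin (π/12) :=
    by have := Real.sin_gt_sub_cube (x := π/12) (by positivity); nlinarith [pow_pos (by positivity : (0:ℝ) < π/12) 3]
  have hcpos : (0:ℝ) < Real.cos (π/12) :=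
    Real.cos_pos_of_mem_Ioo ⟨by nlinarith, by nlinarith⟩
  have hcle : Real.cos (π/12) ≤ 1 := Real.cos_le_one _
  have hx1 : (0.26179:ℝ) < π/12 := by linarith
  have hx : π/12 < (0.2625:ℝ) := by linarith
  have hx2 : (π/12)^2 < 0.069 := by nlinarith
  have hx3 : (π/12)^3 < 0.01812 := by nlinarith
  have h1 : (0.257:ℝ) < Real.sin (π/12) := by nlinarith
  rw [lt_div_iff₀ hcpos]
  nlinarith

lemma aux_sqrt3_lb : (1.154:ℝ) < 2 / Real.sqrt 3 := by
  have h3 : Real.sqrt 3 < 1.7331 := by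
    nlinarith [Real.sq_sqrt (by norm_num : (3:ℝ) ≥ 0), Real.sqrt_nonneg 3]
  have h3p : (0:ℝ) < Real.sqrt 3 := Real.sqrt_pos.2 (by norm_num)
  rw [lt_div_iff₀ h3p]; nlinarith

lemma aux_sqrt3_ub : 2 / Real.sqrt 3 < 1.156 := by
  have h3 : (1.732:ℝ) < Real.sqrt 3 := by
    nlinarith [Real.sq_sqrt (by norm_num : (3:ℝ) ≥ 0), Real.sqrt_nonneg 3]
  rw [div_lt_iff₀ (by linarith)]; nlinarith

/-- There exists `μ ∈ (1.4, 1.5)` solving Grant\'s transcendental equation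
`(μ + 2/3) tan(πμ/2 + π/3) + μ tan(πμ/2) + 2/√3 = 0`. -/
theorem grant_second_root :
    ∃ μ ∈ Set.Ioo (1.4 : ℝ) 1.5,
      (μ + 2/3) * Real.tan (π*μ/2 + π/3) + μ * Real.tan (π*μ/2) + 2/Real.sqrt 3 = 0 := by
  have hπ := Real.pi_pos
  set f : ℝ → ℝ := fun μ =>
    (μ + 2/3) * Real.tan (π*μ/2 + π/3) + μ * Real.tan (π*μ/2) + 2/Real.sqrt 3 with hf
  have hcont : ContinuousOn f (Set.Icc (1.4:ℝ) 1.5) := by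
    intro μ hμ
    obtain ⟨h1, h2⟩ := hμ
    have hc1 : Real.cos (π*μ/2) ≠ 0 :=
      ne_of_lt (Real.cos_neg_of_pi_div_two_lt_of_lt (by nlinarith) (by nlinarith))
    have hc2 : Real.cos (π*μ/2 + π/3) ≠ 0 :=
      ne_of_lt (Real.cos_neg_of_pi_div_two_lt_of_lt (by nlinarith) (by nlinarith))
    have l1 : ContinuousAt (fun μ : ℝ => π*μ/2 + π/3) μ := by fun_prop
    have l2 : ContinuousAt (fun μ : ℝ => π*μ/2) μ := by fun_prop
    have t1 : ContinuousAt (fun μ : ℝ => Real.tan (π*μ/2 + π/3)) μ :=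
      ContinuousAt.comp (g := Real.tan) (f := fun μ : ℝ => π*μ/2 + π/3)
        (Real.continuousAt_tan.2 hc2) l1
    have t2 : ContinuousAt (fun μ : ℝ => Real.tan (π*μ/2)) μ :=
      ContinuousAt.comp (g := Real.tan) (f := fun μ : ℝ => π*μ/2)
        (Real.continuousAt_tan.2 hc1) l2
    exact (((((continuousAt_id.add continuousAt_const).mul t1).add
      (continuousAt_id.mul t2)).add continuousAt_const)).continuousWithinAt
  have e14a : π*(1.4:ℝ)/2 + π/3 = 31*π/30 := by ring_nf
  have e14b : π*(1.4:ℝ)/2 = 7*π/10 := by ring_nf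
  have e15a : π*(1.5:ℝ)/2 + π/3 = 13*π/12 := by ring_nf
  have e15b : π*(1.5:ℝ)/2 = 3*π/4 := by ring_nf
  have htan34 : Real.tan (3*π/4) = -1 := by
    have hper : Real.tan (3*π/4 - π) = Real.tan (3*π/4) := Real.tan_periodic.sub_eq _
    have : 3*π/4 - π = -(π/4) := by ring
    rw [← hper, this, Real.tan_neg, Real.tan_pi_div_four]
  have hf14 : f 1.4 < 0 := by
    simp only [hf, e14b]
    have e14a' : 7*π/10 + π/3 = 31*π/30 := by ring
    rw [e14a']
    have := aux_tan31
    have := aux_tan7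
    have := aux_sqrt3_ub
    norm_num
    nlinarith
  have hf15 : 0 < f 1.5 := by
    simp only [hf, e15b]
    have e15a' : 3*π/4 + π/3 = 13*π/12 := by ring
    rw [e15a', htan34]
    have := aux_tan13
    have := aux_sqrt3_lb
    norm_num
    nlinarith
  have hsub := intermediate_value_Ioo (by norm_num : (1.4:ℝ) ≤ 1.5) hcont
  have h0 : (0:ℝ) ∈ Set.Ioo (f 1.4) (f 1.5) := ⟨hf14, hf15⟩
  obtain ⟨μ, hμ, hμ0⟩ := hsub h0
  exact ⟨μ, hμ, hμ0⟩
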